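/- For every integer r ≥ 2, the generating series S_{3,b} of the 3-colored partitions of type 3.b satisfies S_{3,b} = H² (q)_{r−1}/(q)_1 − H/(q)_1. -/

import Mathlib

open PowerSeries Finset

/-- `l` is (the list of parts, in non-increasing order, of) an integer partition. -/
def IsPtn (l : List ℕ) : Prop := l.Pairwise (· ≥ ·) ∧ ∀ x ∈ l, 0 < x

/-- the smallest part of a partition (listed in non-increasing order). -/
def Kpart (l : List ℕ) : ℕ := l.getD (l.length - 1) 0

/-- the `k`-th smallest part of a partition (listed in non-increasing order). -/
def Ikpart (l : List ℕ) (k : ℕ) : ℕ := l.getD (l.length - k) 0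

/-- `H`, the generating series of the partition function. -/
noncomputable def Hq : PowerSeries ℚ :=
  PowerSeries.mk fun n => (Set.ncard {l : List ℕ | IsPtn l ∧ l.sum = n} : ℚ)

/-- `(q)_n = (1−q)(1−q²)⋯(1−qⁿ)`, with `(q)_0 = 1`. -/
noncomputable def qPoch (n : ℕ) : PowerSeries ℚ :=
  ∏ j ∈ Finset.range n, (1 - (X : PowerSeries ℚ) ^ (j + 1))

/-- generating series counting 3-colored partitions (triples of partitions) satisfying `P`,
by total size. -/
noncomputable def cseries (P : List ℕ → List ℕ → List ℕ → Prop) : PowerSeries ℚ :=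
  PowerSeries.mk fun n =>
    (Set.ncard {t : List ℕ × List ℕ × List ℕ |
        P t.1 t.2.1 t.2.2 ∧ t.1.sum + t.2.1.sum + t.2.2.sum = n} : ℚ)

/-- type 3.b: black and red parts non-empty, no green parts, `ℓ_r ≥ k` and `k + i_k ≥ r`. -/
def Type3b (r : ℕ) (b rd g : List ℕ) : Prop :=
  IsPtn b ∧ IsPtn rd ∧ IsPtn g ∧ b ≠ [] ∧ rd ≠ [] ∧ g = [] ∧
    Kpart b ≤ rd.length ∧ r ≤ Kpart b + Ikpart rd (Kpart b)

/-!
Cutting off the smallest black part `k` and the `k`-th smallest red part `i` leaves a partition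
into parts `≥ k`, a partition into parts `≥ i`, and exactly `k - 1` red parts `≤ i`. So the
`(k, i)`-stratum of type 3.b has series `q^(k+i) · H (q)_(k-1) · H (q)_(i-1) · q^(k-1) B`, with
the Gaussian binomial `B = (q)_(k+i-2) / ((q)_(k-1) (q)_(i-1))`, i.e. `H² q^(2k+i-1) (q)_(k+i-2)`.
For fixed `t = k + i` the geometric sum over `k` gives
`H² q^t (q)_(t-1) / (1 - q) = H² ((q)_(t-1) - (q)_t) / (1 - q)`, which telescopes over `t ≥ r` to
`H² ((q)_(r-1) - (q)_∞) / (1 - q)`, and `H (q)_∞ = 1`. The infinite sums are handled modulo `q^N`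
for every `N`.
-/

section SizeSeries

variable {α β : Type*}

noncomputable def sizeSeries (σ : α → ℕ) (U : Set α) : PowerSeries ℚ :=
  PowerSeries.mk fun n => ({x ∈ U | σ x = n}.ncard : ℚ)

def FiniteLevels (σ : α → ℕ) (U : Set α) : Prop := ∀ n, {x ∈ U | σ x = n}.Finite

lemma coeff_sizeSeries (σ : α → ℕ) (U : Set α) (n : ℕ) :
    coeff n (sizeSeries σ U) = ({x ∈ U | σ x = n}.ncard : ℚ) :=
  coeff_mk _ _

lemma FiniteLevels.mono {σ : α → ℕ} {U V : Set α} (hV : FiniteLevels σ V) (h : U ⊆ V) :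
    FiniteLevels σ U :=
  fun n => (hV n).subset fun _ hx => ⟨h hx.1, hx.2⟩

lemma FiniteLevels.prod {σ : α → ℕ} {τ : β → ℕ} {U : Set α} {V : Set β}
    (hU : FiniteLevels σ U) (hV : FiniteLevels τ V) :
    FiniteLevels (fun p => σ p.1 + τ p.2) (U ×ˢ V) := by
  intro n
  refine ((Set.finite_Iic n).biUnion fun m _ => hU m).prod
    ((Set.finite_Iic n).biUnion fun m _ => hV m) |>.subset ?_
  rintro ⟨x, y⟩ ⟨⟨hx, hy⟩, rfl⟩
  exact ⟨Set.mem_biUnion (Set.mem_Iic.mpr (Nat.le_add_right _ _)) ⟨hx, rfl⟩,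
    Set.mem_biUnion (Set.mem_Iic.mpr (Nat.le_add_left _ _)) ⟨hy, rfl⟩⟩

lemma Set.ncard_eq_sum_ncard_fibers {ι : Type*} [DecidableEq ι] {S : Set α} (hS : S.Finite)
    (c : α → ι) {D : Finset ι} (hc : ∀ x ∈ S, c x ∈ D) :
    S.ncard = ∑ j ∈ D, {x ∈ S | c x = j}.ncard := by
  rw [Set.ncard_eq_toFinset_card S hS,
    Finset.card_eq_sum_card_fiberwise fun x hx => hc x (hS.mem_toFinset.mp hx)]
  refine Finset.sum_congr rfl fun j _ => ?_
  rw [← Set.ncard_coe_finset]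
  congr 1
  ext x
  simp

lemma coeff_sizeSeries_eq_sum_fibers {ι : Type*} [DecidableEq ι] {σ : α → ℕ} {U : Set α}
    (hU : FiniteLevels σ U) (c : α → ι) {D : Finset ι} {n : ℕ}
    (hc : ∀ x ∈ U, σ x = n → c x ∈ D) :
    coeff n (sizeSeries σ U) = ∑ j ∈ D, coeff n (sizeSeries σ {x ∈ U | c x = j}) := by
  simp only [coeff_sizeSeries]
  rw [Set.ncard_eq_sum_ncard_fibers (hU n) c fun x hx => hc x hx.1 hx.2]
  push_cast
  refine Finset.sum_congr rfl fun j _ => ?_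
  congr 2
  ext x
  simp only [Set.mem_ofPred_eq]
  tauto

lemma sizeSeries_mul {σ : α → ℕ} {τ : β → ℕ} {U : Set α} {V : Set β}
    (hU : FiniteLevels σ U) (hV : FiniteLevels τ V) :
    sizeSeries σ U * sizeSeries τ V = sizeSeries (fun p => σ p.1 + τ p.2) (U ×ˢ V) := by
  ext n
  rw [coeff_mul, coeff_sizeSeries, Set.ncard_eq_sum_ncard_fibers ((hU.prod hV) n)
    (fun p => (σ p.1, τ p.2)) (D := antidiagonal n) fun p hp => mem_antidiagonal.mpr hp.2]
  push_cast
  refine Finset.sum_congr rfl fun ⟨u, v⟩ huv => ?_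
  have hfiber : {p ∈ {p ∈ U ×ˢ V | σ p.1 + τ p.2 = n} | (σ p.1, τ p.2) = (u, v)} =
      {x ∈ U | σ x = u} ×ˢ {y ∈ V | τ y = v} := by
    ext ⟨x, y⟩
    simp only [Set.mem_ofPred_eq, Set.mem_prod, Prod.mk.injEq]
    have := mem_antidiagonal.mp huv
    constructor
    · rintro ⟨⟨⟨hx, hy⟩, -⟩, rfl, rfl⟩
      exact ⟨⟨hx, rfl⟩, hy, rfl⟩
    · rintro ⟨⟨hx, rfl⟩, hy, rfl⟩
      exact ⟨⟨⟨hx, hy⟩, this⟩, rfl, rfl⟩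
  rw [hfiber, Set.ncard_prod, coeff_sizeSeries, coeff_sizeSeries]
  push_cast
  rfl

lemma sizeSeries_eq_X_pow_mul_of_bijOn {σ : α → ℕ} {τ : β → ℕ} {U : Set α} {V : Set β}
    {f : β → α} (hf : Set.BijOn f V U) (c : ℕ) (hσ : ∀ y ∈ V, σ (f y) = τ y + c) :
    sizeSeries σ U = X ^ c * sizeSeries τ V := by
  ext n
  rw [coeff_sizeSeries, coeff_X_pow_mul', ← hf.image_eq]
  split_ifs with hcn
  · rw [coeff_sizeSeries, ← (hf.injOn.mono fun _ hy => hy.1).ncard_image]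
    congr 2
    ext x
    simp only [Set.mem_image, Set.mem_ofPred_eq]
    constructor
    · rintro ⟨⟨y, hy, rfl⟩, hs⟩
      exact ⟨y, ⟨hy, by rw [hσ y hy] at hs; omega⟩, rfl⟩
    · rintro ⟨y, ⟨hy, hs⟩, rfl⟩
      exact ⟨⟨y, hy, rfl⟩, by rw [hσ y hy]; omega⟩
  · rw [Set.sep_eq_empty_iff_mem_false.mpr, Set.ncard_empty, Nat.cast_zero]
    rintro _ ⟨y, hy, rfl⟩ hs
    rw [hσ y hy] at hs
    omega

lemma sizeSeries_eq_sep_add_sep_not {σ : α → ℕ} {U : Set α} (hU : FiniteLevels σ U)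
    (p : α → Prop) :
    sizeSeries σ U = sizeSeries σ {x ∈ U | p x} + sizeSeries σ {x ∈ U | ¬ p x} := by
  ext n
  rw [map_add, coeff_sizeSeries, coeff_sizeSeries, coeff_sizeSeries, ← Nat.cast_add,
    ← Set.ncard_union_eq _ ((hU n).subset fun x hx => ⟨hx.1.1, hx.2⟩)
      ((hU n).subset fun x hx => ⟨hx.1.1, hx.2⟩)]
  · congr 2
    ext x
    simp only [Set.mem_ofPred_eq, Set.mem_union]
    tauto
  · exact Set.disjoint_left.mpr fun x hx hx' => hx'.1.2 hx.1.2

lemma sizeSeries_singleton (σ : α → ℕ) (x : α) : sizeSeries σ {x} = X ^ σ x := by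
  ext n
  rw [coeff_sizeSeries, coeff_X_pow]
  split_ifs with h
  · rw [Set.sep_eq_self_iff_mem_true.mpr fun y hy => by rw [hy, h], Set.ncard_singleton,
      Nat.cast_one]
  · rw [Set.sep_eq_empty_iff_mem_false.mpr fun y hy => by rw [hy]; exact Ne.symm h,
      Set.ncard_empty, Nat.cast_zero]

end SizeSeries

section PartitionLists

variable {l l₁ l₂ δ γ : List ℕ} {i k x : ℕ}

lemma isPtn_nil : IsPtn [] := ⟨List.Pairwise.nil, by simp⟩

lemma isPtn_append :
    IsPtn (l₁ ++ l₂) ↔ IsPtn l₁ ∧ IsPtn l₂ ∧ ∀ x ∈ l₁, ∀ y ∈ l₂, y ≤ x := by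
  simp only [IsPtn, List.pairwise_append, List.mem_append]
  grind

lemma isPtn_cons : IsPtn (k :: l) ↔ IsPtn l ∧ 0 < k ∧ ∀ x ∈ l, x ≤ k := by
  simp only [IsPtn, List.pairwise_cons, List.forall_mem_cons]
  tauto

lemma isPtn_append_singleton : IsPtn (l ++ [k]) ↔ IsPtn l ∧ 0 < k ∧ ∀ x ∈ l, k ≤ x := by
  simp only [isPtn_append, isPtn_cons, List.mem_singleton]
  grind [isPtn_nil]

lemma Kpart_append_singleton : Kpart (l ++ [k]) = k := by
  simp [Kpart]

lemma Ikpart_append_cons : Ikpart (δ ++ i :: γ) (γ.length + 1) = i := by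
  simp [Ikpart, List.getD_eq_getElem?_getD]

lemma Kpart_mem (h : l ≠ []) : Kpart l ∈ l := by
  obtain ⟨L, y, rfl⟩ := (List.eq_nil_or_concat' l).resolve_left h
  simp [Kpart_append_singleton]

lemma IsPtn.Kpart_le (hl : IsPtn l) (hx : x ∈ l) : Kpart l ≤ x := by
  obtain ⟨L, y, rfl⟩ := (List.eq_nil_or_concat' l).resolve_left (List.ne_nil_of_mem hx)
  rw [Kpart_append_singleton]
  rcases List.mem_append.mp hx with hx | hx
  · exact (isPtn_append_singleton.mp hl).2.2 x hx
  · exact (List.mem_singleton.mp hx).ge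

lemma Ikpart_mem (hk : 0 < k) (hkl : k ≤ l.length) : Ikpart l k ∈ l := by
  rw [Ikpart, List.getD_eq_getElem _ _ (by omega)]
  exact List.getElem_mem _

lemma exists_eq_append_cons_of_lt_length {a : ℕ} (h : a < l.length) :
    ∃ δ x γ, l = δ ++ x :: γ ∧ γ.length = a := by
  obtain ⟨x, γ, hxγ⟩ := List.exists_cons_of_length_eq_add_one
    (n := a) (l := l.drop (l.length - (a + 1))) (by simp; omega)
  refine ⟨l.take (l.length - (a + 1)), x, γ, by rw [← hxγ, List.take_append_drop], ?_⟩
  have := congrArg List.length hxγ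
  simp at this
  omega

lemma finiteLevels_isPtn : FiniteLevels List.sum {l | IsPtn l} := fun n =>
  (Set.finite_range fun c : Composition n => c.blocks).subset fun l ⟨hl, hs⟩ =>
    ⟨⟨l, fun hx => hl.2 _ hx, hs⟩, rfl⟩

end PartitionLists

def ptnsGE (j : ℕ) : Set (List ℕ) := {l | IsPtn l ∧ ∀ x ∈ l, j ≤ x}

def ptnsMinEq (k : ℕ) : Set (List ℕ) := {l | IsPtn l ∧ l ≠ [] ∧ Kpart l = k}

def ptnsLenEqPartsLE (a i : ℕ) : Set (List ℕ) := {l | IsPtn l ∧ l.length = a ∧ ∀ x ∈ l, x ≤ i}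

def ptnsKthSmallestEq (k i : ℕ) : Set (List ℕ) := {l | IsPtn l ∧ k ≤ l.length ∧ Ikpart l k = i}

lemma finiteLevels_of_subset_isPtn {U : Set (List ℕ)} (hU : ∀ l ∈ U, IsPtn l) :
    FiniteLevels List.sum U :=
  finiteLevels_isPtn.mono hU

lemma sizeSeries_ptnsMinEq {k : ℕ} (hk : 0 < k) :
    sizeSeries List.sum (ptnsMinEq k) = X ^ k * sizeSeries List.sum (ptnsGE k) := by
  refine sizeSeries_eq_X_pow_mul_of_bijOn (f := (· ++ [k])) ⟨?_, ?_, ?_⟩ k fun l _ => by simp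
  · rintro l ⟨hl, hge⟩
    exact ⟨isPtn_append_singleton.mpr ⟨hl, hk, hge⟩, by simp, Kpart_append_singleton⟩
  · intro l₁ _ l₂ _ h
    simpa using h
  · rintro b ⟨hb, hne, rfl⟩
    obtain ⟨L, y, rfl⟩ := (List.eq_nil_or_concat' b).resolve_left hne
    rw [Kpart_append_singleton]
    obtain ⟨hL, -, hge⟩ := isPtn_append_singleton.mp hb
    exact ⟨L, ⟨hL, hge⟩, rfl⟩

lemma sizeSeries_ptnsGE_eq_add {j : ℕ} (hj : 0 < j) :
    sizeSeries List.sum (ptnsGE j) =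
      sizeSeries List.sum (ptnsGE (j + 1)) + X ^ j * sizeSeries List.sum (ptnsGE j) := by
  have hmin : {l ∈ ptnsGE j | j ∈ l} = ptnsMinEq j := by
    ext l
    constructor
    · rintro ⟨⟨hl, hge⟩, hj⟩
      have hne := List.ne_nil_of_mem hj
      exact ⟨hl, hne, le_antisymm (hl.Kpart_le hj) (hge _ (Kpart_mem hne))⟩
    · rintro ⟨hl, hne, rfl⟩
      exact ⟨⟨hl, fun x hx => hl.Kpart_le hx⟩, Kpart_mem hne⟩
  have hrest : {l ∈ ptnsGE j | j ∉ l} = ptnsGE (j + 1) := by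
    ext l
    constructor
    · rintro ⟨⟨hl, hge⟩, hj⟩
      exact ⟨hl, fun x hx => lt_of_le_of_ne (hge x hx) fun h => hj (h ▸ hx)⟩
    · rintro ⟨hl, hge⟩
      exact ⟨⟨hl, fun x hx => Nat.le_of_succ_le (hge x hx)⟩,
        fun h => Nat.not_succ_le_self j (hge j h)⟩
  have hsplit := sizeSeries_eq_sep_add_sep_not
    (finiteLevels_of_subset_isPtn fun _ h => h.1 : FiniteLevels List.sum (ptnsGE j)) (j ∈ ·)
  rw [hmin, hrest, sizeSeries_ptnsMinEq hj] at hsplit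
  exact hsplit.trans (add_comm _ _)

lemma qPoch_succ (m : ℕ) : qPoch (m + 1) = qPoch m * (1 - X ^ (m + 1)) :=
  Finset.prod_range_succ _ m

lemma ptnsGE_one : ptnsGE 1 = {l | IsPtn l} :=
  Set.ext fun _ => ⟨And.left, fun h => ⟨h, h.2⟩⟩

lemma Hq_mul_qPoch (j : ℕ) : Hq * qPoch j = sizeSeries List.sum (ptnsGE (j + 1)) := by
  induction j with
  | zero =>
    rw [qPoch, Finset.range_zero, Finset.prod_empty, mul_one, zero_add, ptnsGE_one]
    rfl
  | succ j ih =>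
    rw [qPoch_succ, ← mul_assoc, ih]
    linear_combination sizeSeries_ptnsGE_eq_add (by omega : 0 < j + 1)

lemma X_pow_dvd_sizeSeries_ptnsGE_sub_one (j : ℕ) :
    X ^ j ∣ sizeSeries List.sum (ptnsGE j) - 1 := by
  refine X_pow_dvd_iff.mpr fun m hm => ?_
  have hlevel : {l ∈ ptnsGE j | l.sum = m} = if m = 0 then {[]} else ∅ := by
    ext l
    constructor
    · rintro ⟨⟨-, hge⟩, rfl⟩
      obtain rfl : l = [] := List.eq_nil_iff_forall_not_mem.mpr fun x hx => by
        have := List.le_sum_of_mem hx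
        have := hge x hx
        omega
      simp
    · intro hl
      split_ifs at hl with hm0
      · rw [Set.mem_singleton_iff.mp hl, hm0]
        exact ⟨⟨isPtn_nil, by simp⟩, rfl⟩
      · exact absurd hl (Set.notMem_empty l)
  rw [map_sub, coeff_sizeSeries, coeff_one, hlevel]
  split_ifs <;> simp

lemma ptnsLenEqPartsLE_zero (i : ℕ) : ptnsLenEqPartsLE 0 i = {[]} := by
  ext l
  simp only [ptnsLenEqPartsLE, List.length_eq_zero_iff, Set.mem_singleton_iff, Set.mem_ofPred_eq]
  constructor
  · exact fun h => h.2.1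
  · rintro rfl
    exact ⟨isPtn_nil, rfl, by simp⟩

lemma ptnsLenEqPartsLE_one (a : ℕ) : ptnsLenEqPartsLE a 1 = {List.replicate a 1} := by
  ext l
  simp only [ptnsLenEqPartsLE, List.eq_replicate_iff, Set.mem_singleton_iff, Set.mem_ofPred_eq]
  constructor
  · rintro ⟨hl, hlen, hle⟩
    exact ⟨hlen, fun x hx => le_antisymm (hle x hx) (hl.2 x hx)⟩
  · rintro ⟨hlen, h1⟩
    refine ⟨⟨?_, fun x hx => by rw [h1 x hx]; exact one_pos⟩, hlen, fun x hx => (h1 x hx).le⟩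
    exact List.pairwise_of_forall_mem_list fun x hx y hy => by rw [h1 x hx, h1 y hy]

lemma sizeSeries_ptnsLenEqPartsLE_succ (a i : ℕ) :
    sizeSeries List.sum (ptnsLenEqPartsLE (a + 1) (i + 1)) =
      sizeSeries List.sum (ptnsLenEqPartsLE (a + 1) i) +
        X ^ (i + 1) * sizeSeries List.sum (ptnsLenEqPartsLE a (i + 1)) := by
  have htop : sizeSeries List.sum {l ∈ ptnsLenEqPartsLE (a + 1) (i + 1) | i + 1 ∈ l} =
      X ^ (i + 1) * sizeSeries List.sum (ptnsLenEqPartsLE a (i + 1)) := by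
    refine sizeSeries_eq_X_pow_mul_of_bijOn (f := fun l => (i + 1) :: l) ⟨?_, ?_, ?_⟩ (i + 1)
      fun l _ => by simp [add_comm]
    · rintro l ⟨hl, hlen, hle⟩
      exact ⟨⟨isPtn_cons.mpr ⟨hl, i.succ_pos, hle⟩, by simp [hlen],
        List.forall_mem_cons.mpr ⟨le_rfl, hle⟩⟩, List.mem_cons_self⟩
    · intro l₁ _ l₂ _ h
      simpa using h
    · rintro _ ⟨⟨hl, hlen, hle⟩, hmem⟩
      obtain ⟨y, L, rfl⟩ := List.exists_cons_of_length_eq_add_one hlen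
      obtain ⟨hL, -, hLy⟩ := isPtn_cons.mp hl
      have hy : y = i + 1 := by
        rcases List.mem_cons.mp hmem with h | h
        · exact h.symm
        · exact le_antisymm (hle y List.mem_cons_self) (hLy _ h)
      subst hy
      exact ⟨L, ⟨hL, by simpa using hlen, fun x hx => hle x (List.mem_cons_of_mem _ hx)⟩, rfl⟩
  have hrest : {l ∈ ptnsLenEqPartsLE (a + 1) (i + 1) | i + 1 ∉ l} = ptnsLenEqPartsLE (a + 1) i := by
    ext l
    constructor
    · rintro ⟨⟨hl, hlen, hle⟩, hmem⟩
      exact ⟨hl, hlen, fun x hx => Nat.le_of_lt_succ <|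
        lt_of_le_of_ne (hle x hx) fun h => hmem (by subst h; exact hx)⟩
    · rintro ⟨hl, hlen, hle⟩
      exact ⟨⟨hl, hlen, fun x hx => (hle x hx).trans i.le_succ⟩,
        fun h => Nat.not_succ_le_self i (hle _ h)⟩
  have hsplit := sizeSeries_eq_sep_add_sep_not (finiteLevels_of_subset_isPtn fun _ h => h.1 :
    FiniteLevels List.sum (ptnsLenEqPartsLE (a + 1) (i + 1))) (i + 1 ∈ ·)
  rw [htop, hrest] at hsplit
  exact hsplit.trans (add_comm _ _)

lemma qPoch_mul_qPoch_mul_sizeSeries_ptnsLenEqPartsLE (a i : ℕ) :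
    qPoch a * qPoch i * sizeSeries List.sum (ptnsLenEqPartsLE a (i + 1)) =
      X ^ a * qPoch (a + i) := by
  induction a generalizing i with
  | zero => simp [ptnsLenEqPartsLE_zero, sizeSeries_singleton, qPoch]
  | succ a iha =>
    induction i with
    | zero => simp [ptnsLenEqPartsLE_one, sizeSeries_singleton, qPoch, mul_comm]
    | succ i ihi =>
      rw [show a + 1 + (i + 1) = a + i + 1 + 1 by ring, qPoch_succ (a + i + 1)]
      rw [show a + 1 + i = a + i + 1 by ring] at ihi
      have hai := iha (i + 1)
      rw [show a + (i + 1) = a + i + 1 by ring] at hai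
      linear_combination (qPoch (a + 1) * qPoch (i + 1)) *
          sizeSeries_ptnsLenEqPartsLE_succ a (i + 1) + (1 - X ^ (i + 1)) * ihi +
        X ^ (i + 2) * (1 - X ^ (a + 1)) * hai +
        (qPoch (a + 1) * sizeSeries List.sum (ptnsLenEqPartsLE (a + 1) (i + 1))) * qPoch_succ i +
        (X ^ (i + 2) * qPoch (i + 1) * sizeSeries List.sum (ptnsLenEqPartsLE a (i + 2))) *
          qPoch_succ a

lemma sizeSeries_ptnsKthSmallestEq {a i : ℕ} (hi : 0 < i) :
    sizeSeries List.sum (ptnsKthSmallestEq (a + 1) i) =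
      X ^ i * (sizeSeries List.sum (ptnsGE i) * sizeSeries List.sum (ptnsLenEqPartsLE a i)) := by
  rw [sizeSeries_mul (finiteLevels_of_subset_isPtn fun _ h => h.1)
    (finiteLevels_of_subset_isPtn fun _ h => h.1)]
  refine sizeSeries_eq_X_pow_mul_of_bijOn (f := fun p => p.1 ++ i :: p.2) ⟨?_, ?_, ?_⟩ i
    fun p _ => by simp only [List.sum_append, List.sum_cons]; ring
  · rintro ⟨δ, γ⟩ ⟨⟨hδ, hge⟩, hγ, hlen, hle⟩
    refine ⟨isPtn_append.mpr ⟨hδ, isPtn_cons.mpr ⟨hγ, hi, hle⟩, fun x hx y hy => ?_⟩,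
      by simp [hlen], by rw [← hlen]; exact Ikpart_append_cons⟩
    rcases List.mem_cons.mp hy with rfl | hy
    exacts [hge x hx, (hle y hy).trans (hge x hx)]
  · rintro ⟨δ, γ⟩ ⟨-, -, hlen, -⟩ ⟨δ', γ'⟩ ⟨-, -, hlen', -⟩ h
    obtain ⟨hδ, hγ⟩ := List.append_inj' h (by simp [hlen, hlen'])
    exact Prod.ext hδ (List.cons.inj hγ).2
  · rintro l ⟨hl, hlen, rfl⟩
    obtain ⟨δ, x, γ, rfl, rfl⟩ := exists_eq_append_cons_of_lt_length hlen
    rw [Ikpart_append_cons]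
    obtain ⟨hδ, hxγ, hcross⟩ := isPtn_append.mp hl
    obtain ⟨hγ, -, hle⟩ := isPtn_cons.mp hxγ
    exact ⟨(δ, γ), ⟨⟨hδ, fun y hy => hcross y hy x List.mem_cons_self⟩, hγ, rfl, hle⟩, rfl⟩

def tripleSize (t : List ℕ × List ℕ × List ℕ) : ℕ := t.1.sum + t.2.1.sum + t.2.2.sum

def type3bIndex (t : List ℕ × List ℕ × List ℕ) : ℕ × ℕ :=
  (Kpart t.1 + Ikpart t.2.1 (Kpart t.1), Kpart t.1)

def type3bSet (r : ℕ) : Set (List ℕ × List ℕ × List ℕ) := {t | Type3b r t.1 t.2.1 t.2.2}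

def type3bFiber (r : ℕ) (p : ℕ × ℕ) : Set (List ℕ × List ℕ × List ℕ) :=
  {x ∈ type3bSet r | type3bIndex x = p}

lemma cseries_type3b_eq_sizeSeries (r : ℕ) :
    cseries (Type3b r) = sizeSeries tripleSize (type3bSet r) :=
  rfl

lemma finiteLevels_type3bSet (r : ℕ) : FiniteLevels tripleSize (type3bSet r) := by
  have hsize : tripleSize = fun t => t.1.sum + (t.2.1.sum + t.2.2.sum) :=
    funext fun _ => add_assoc _ _ _
  rw [hsize]
  exact (finiteLevels_isPtn.prod (finiteLevels_isPtn.prod finiteLevels_isPtn)).mono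
    fun t ht => ⟨ht.1, ht.2.1, ht.2.2.1⟩

lemma sizeSeries_type3bFiber_eq_mul {r k i : ℕ} (hk : 0 < k) (hr : r ≤ k + i) :
    sizeSeries tripleSize (type3bFiber r (k + i, k)) =
      sizeSeries List.sum (ptnsMinEq k) * sizeSeries List.sum (ptnsKthSmallestEq k i) := by
  rw [sizeSeries_mul (finiteLevels_of_subset_isPtn fun _ h => h.1)
    (finiteLevels_of_subset_isPtn fun _ h => h.1)]
  refine (sizeSeries_eq_X_pow_mul_of_bijOn (τ := fun p : List ℕ × List ℕ => p.1.sum + p.2.sum)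
    (f := fun p => (p.1, p.2, [])) ⟨?_, ?_, ?_⟩ 0
    fun p _ => by simp [tripleSize]).trans (by rw [pow_zero, one_mul])
  · rintro ⟨b, rd⟩ ⟨⟨hb, hne, rfl⟩, hrd, hlen, rfl⟩
    dsimp only at hk hb hne hrd hlen hr ⊢
    exact ⟨⟨hb, hrd, isPtn_nil, hne, List.ne_nil_of_length_pos (l := rd) (by omega), rfl,
      hlen, hr⟩, rfl⟩
  · rintro ⟨b, rd⟩ - ⟨b', rd'⟩ - h
    simpa using h
  · rintro ⟨b, rd, g⟩ ⟨⟨hb, hrd, -, hne, -, rfl, hlen, -⟩, hidx⟩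
    simp only [type3bIndex, Prod.mk.injEq] at hidx
    obtain ⟨hsum, hk⟩ := hidx
    refine ⟨(b, rd), ⟨⟨hb, hne, hk⟩, hrd, hk ▸ hlen, ?_⟩, rfl⟩
    show Ikpart rd k = i
    rw [← hk]
    omega

lemma sizeSeries_type3bFiber {r a c : ℕ} (h : r ≤ a + c + 2) :
    sizeSeries tripleSize (type3bFiber r (a + c + 2, a + 1)) =
      Hq ^ 2 * X ^ (a + c + 2) * X ^ a * qPoch (a + c) := by
  rw [show a + c + 2 = (a + 1) + (c + 1) by ring,
    sizeSeries_type3bFiber_eq_mul a.succ_pos (by omega),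
    sizeSeries_ptnsMinEq (k := a + 1) (by omega),
    sizeSeries_ptnsKthSmallestEq (i := c + 1) (by omega), ← Hq_mul_qPoch, ← Hq_mul_qPoch]
  linear_combination (Hq ^ 2 * X ^ (a + 1 + (c + 1))) *
    qPoch_mul_qPoch_mul_sizeSeries_ptnsLenEqPartsLE a c

lemma PowerSeries.eq_of_forall_X_pow_dvd_sub {R : Type*} [CommRing R] {f g : PowerSeries R}
    (N₀ : ℕ) (h : ∀ N ≥ N₀, X ^ N ∣ f - g) : f = g := by
  ext m
  rw [← sub_eq_zero, ← map_sub]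
  exact X_pow_dvd_iff.mp (h (max (m + 1) N₀) (le_max_right _ _)) m
    (lt_of_lt_of_le m.lt_succ_self (le_max_left _ _))

lemma sum_Ico_qPoch_sub {r N : ℕ} (hrN : r ≤ N) :
    ∑ t ∈ Ico r N, (qPoch (t - 1) - qPoch t) = qPoch (r - 1) - qPoch (N - 1) := by
  have h := Finset.sum_Ico_sub (fun t => qPoch (t - 1)) hrN
  simp only [Nat.add_sub_cancel] at h
  rw [← neg_sub, ← h, ← Finset.sum_neg_distrib]
  simp

lemma X_pow_dvd_cseries_type3b_sub (r N : ℕ) :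
    X ^ N ∣ cseries (Type3b r) - ∑ t ∈ Ico r N, ∑ k ∈ Ico 1 t,
      sizeSeries tripleSize (type3bFiber r (t, k)) := by
  refine X_pow_dvd_iff.mpr fun m hm => ?_
  rw [map_sub, cseries_type3b_eq_sizeSeries,
    coeff_sizeSeries_eq_sum_fibers (finiteLevels_type3bSet r) type3bIndex
      (D := (Ico r N ×ˢ Ico 1 N).filter fun p => p.2 < p.1) ?_,
    Finset.sum_finset_product _ (Ico r N) (fun t => Ico 1 t) ?_, map_sum]
  · simp only [map_sum]
    exact sub_self _
  · intro p
    simp only [Finset.mem_filter, Finset.mem_product, Finset.mem_Ico]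
    omega
  · rintro ⟨b, rd, g⟩ ⟨hb, hrd, -, hne, -, rfl, hlen, hr⟩ hsize
    dsimp only at hb hrd hne hlen hr
    simp only [tripleSize, List.sum_nil, add_zero] at hsize
    have hk := Kpart_mem hne
    have hi := Ikpart_mem (hb.2 _ hk) hlen
    have := List.le_sum_of_mem hk
    have := List.le_sum_of_mem hi
    have := hb.2 _ hk
    have := hrd.2 _ hi
    simp only [type3bIndex, Finset.mem_filter, Finset.mem_product, Finset.mem_Ico]
    omega

lemma one_sub_X_mul_sum_sizeSeries_type3bFiber {r t : ℕ} (hrt : r ≤ t) (ht : 2 ≤ t) :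
    (1 - X) * ∑ k ∈ Ico 1 t,
        sizeSeries tripleSize (type3bFiber r (t, k)) =
      Hq ^ 2 * (qPoch (t - 1) - qPoch t) := by
  obtain ⟨s, rfl⟩ : ∃ s, t = s + 2 := ⟨t - 2, by omega⟩
  have hfibers : ∀ a ∈ range (s + 1),
      sizeSeries tripleSize (type3bFiber r (s + 2, 1 + a)) =
        Hq ^ 2 * X ^ (s + 2) * qPoch s * X ^ a := by
    intro a ha
    obtain ⟨c, rfl⟩ : ∃ c, s = a + c := ⟨s - a, by simp at ha; omega⟩
    rw [add_comm 1 a, sizeSeries_type3bFiber hrt]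
    ring
  rw [Finset.sum_Ico_eq_sum_range, show s + 2 - 1 = s + 1 by omega,
    Finset.sum_congr rfl hfibers, ← Finset.mul_sum, mul_left_comm, mul_neg_geom_sum]
  rw [qPoch_succ (s + 1), qPoch_succ s]
  ring

/-- `S_{3,b} = H² (q)_{r−1}/(q)_1 − H/(q)_1`. -/
theorem S3b_eq (r : ℕ) (hr : 2 ≤ r) :
    cseries (Type3b r) = Hq ^ 2 * qPoch (r - 1) * (qPoch 1)⁻¹ - Hq * (qPoch 1)⁻¹ := by
  have hq1 : qPoch 1 = 1 - X := by simp [qPoch]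
  rw [← sub_mul, PowerSeries.eq_mul_inv_iff_mul_eq (by simp [hq1]), hq1]
  refine PowerSeries.eq_of_forall_X_pow_dvd_sub r fun N hN => ?_
  have htel : (1 - X) * ∑ t ∈ Ico r N, ∑ k ∈ Ico 1 t,
      sizeSeries tripleSize (type3bFiber r (t, k)) =
        Hq ^ 2 * (qPoch (r - 1) - qPoch (N - 1)) := by
    rw [Finset.mul_sum, Finset.sum_congr rfl fun t ht =>
      one_sub_X_mul_sum_sizeSeries_type3bFiber (Finset.mem_Ico.mp ht).1
        (hr.trans (Finset.mem_Ico.mp ht).1), ← Finset.mul_sum, sum_Ico_qPoch_sub hN]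
  have hHq : Hq * qPoch (N - 1) = sizeSeries List.sum (ptnsGE N) := by
    rw [Hq_mul_qPoch, Nat.sub_add_cancel (by omega)]
  obtain ⟨u, hu⟩ := X_pow_dvd_cseries_type3b_sub r N
  obtain ⟨v, hv⟩ := X_pow_dvd_sizeSeries_ptnsGE_sub_one N
  exact ⟨(1 - X) * u - Hq * v, by linear_combination (1 - X) * hu + htel - Hq * hv - Hq * hHq⟩
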